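/- arXiv:2007.03070 — 2 statements merged into one kernel-verified Lean document; each statement's English description precedes it below -/
import Mathlib

section
/- Let A ∈ ℝ^{n×n} with ⟨Ax, x⟩ = 0 for all x (A skew-symmetric) and B ∈ ℝ^{n×1}. If the pair (A, B) is controllable (Kalman rank condition), then the closed-loop matrix A − BBᵀ is Hurwitz: every eigenvalue has strictly negative real part. -/
/-!
After complexification `A` is skew-Hermitian and `A - B Bᵀ = A - B Bᴴ`. Pairing the
eigen-equation `(A - B Bᴴ) v = μ v` with `v` gives `Re μ ‖v‖² = -‖Bᴴ v‖²`, so `Re μ ≤ 0`. If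
`Re μ = 0`, then `Bᴴ v = 0`, so `v` is an eigenvector of `A` and, `A` being skew-Hermitian,
`vᴴ` is a left eigenvector of `A` with `vᴴ B = 0`. Then `vᴴ` kills every column `Aᵏ B` of the
Kalman matrix. A real matrix of full row rank is surjective, hence so is its complexification,
and `v = 0`.
-/

open Matrix

namespace Matrix

section Skew

variable {R n : Type*} [CommRing R] [Fintype n] [DecidableEq n]

theorem transpose_eq_neg_of_forall_dotProduct_mulVec_self_eq_zero {A : Matrix n n R}
    (hA : ∀ x, x ⬝ᵥ A *ᵥ x = 0) : Aᵀ = -A := by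
  ext i j
  have h := hA (Pi.single j 1 + Pi.single i 1)
  simp only [mulVec_add, dotProduct_add, add_dotProduct, hA, zero_add, add_zero] at h
  simp only [mulVec_single_one, single_one_dotProduct, col_apply] at h
  rw [transpose_apply, neg_apply]
  linear_combination h

end Skew

section Kalman

variable {R : Type*} [CommSemiring R] {n : ℕ} {m : Type*}

def kalmanMatrix (A : Matrix (Fin n) (Fin n) R) (B : Matrix (Fin n) m R) :
    Matrix (Fin n) (Fin n × m) R :=
  of fun i kj => (A ^ (kj.1 : ℕ) * B) i kj.2

theorem kalmanMatrix_map {S : Type*} [CommSemiring S] (f : R →+* S)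
    (A : Matrix (Fin n) (Fin n) R) (B : Matrix (Fin n) m R) :
    (kalmanMatrix A B).map f = kalmanMatrix (A.map f) (B.map f) := by
  ext i kj
  simp [kalmanMatrix, ← Matrix.map_pow, ← Matrix.map_mul]

theorem vecMul_kalmanMatrix_eq_zero [Fintype m] {A : Matrix (Fin n) (Fin n) R}
    {B : Matrix (Fin n) m R} {w : Fin n → R} {c : R} (hA : w ᵥ* A = c • w) (hB : w ᵥ* B = 0) :
    w ᵥ* kalmanMatrix A B = 0 := by
  have hpow : ∀ k : ℕ, w ᵥ* A ^ k = c ^ k • w := by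
    intro k
    induction k with
    | zero => simp
    | succ k ih => rw [pow_succ, ← vecMul_vecMul, ih, smul_vecMul, hA, smul_smul, pow_succ]
  ext ⟨k, j⟩
  have hk : w ᵥ* (A ^ (k : ℕ) * B) = 0 := by
    rw [← vecMul_vecMul, hpow, smul_vecMul, hB, smul_zero]
  exact congrFun hk j

end Kalman

theorem eq_zero_of_vecMul_map_eq_zero {K L m ι : Type*} [Field K] [CommRing L] [Fintype m]
    [Fintype ι] [DecidableEq m] (f : K →+* L) {C : Matrix m ι K}
    (hC : C.rank = Fintype.card m) {w : m → L} (hw : w ᵥ* C.map f = 0) : w = 0 := by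
  have hsurj : Function.Surjective C.mulVecLin := by
    rw [← LinearMap.range_eq_top]
    apply Submodule.eq_top_of_finrank_eq
    rw [← Matrix.rank, hC, Module.finrank_fintype_fun_eq_card]
  ext i
  obtain ⟨c, hc⟩ := hsurj (Pi.single i 1)
  calc w i = w ⬝ᵥ f ∘ Pi.single i 1 := by simp [dotProduct, Pi.single_apply]
    _ = w ⬝ᵥ C.map f *ᵥ (f ∘ c) := by rw [← hc]; congr 1; ext j; exact RingHom.map_mulVec f C c j
    _ = 0 := by rw [dotProduct_mulVec, hw, zero_dotProduct]

theorem star_dotProduct_mul_conjTranspose_mulVec {α n m : Type*} [NonUnitalSemiring α]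
    [StarRing α] [Fintype n] [Fintype m] (P : Matrix n m α) (v : n → α) :
    star v ⬝ᵥ (P * Pᴴ) *ᵥ v = star (Pᴴ *ᵥ v) ⬝ᵥ Pᴴ *ᵥ v := by
  rw [← mulVec_mulVec, dotProduct_mulVec, star_mulVec, conjTranspose_conjTranspose]

section SkewHermitianMinusPositive

open RCLike
open scoped ComplexOrder

variable {𝕜 : Type*} [RCLike 𝕜] {n m : Type*} [Fintype n] [Fintype m]

theorem re_star_dotProduct_mulVec_eq_zero {S : Matrix n n 𝕜} (hS : Sᴴ = -S) (v : n → 𝕜) :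
    re (star v ⬝ᵥ S *ᵥ v) = 0 := by
  have hconj : star (star v ⬝ᵥ S *ᵥ v) = -(star v ⬝ᵥ S *ᵥ v) := by
    rw [← star_dotProduct_star, star_star, star_mulVec, ← dotProduct_mulVec, hS, neg_mulVec,
      dotProduct_neg]
  have := congrArg re hconj
  rw [← starRingEnd_apply, conj_re, map_neg] at this
  linarith

theorem re_mul_re_star_dotProduct_self {S : Matrix n n 𝕜} {P : Matrix n m 𝕜} {μ : 𝕜}
    {v : n → 𝕜} (hS : Sᴴ = -S) (hv : (S - P * Pᴴ) *ᵥ v = μ • v) :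
    re μ * re (star v ⬝ᵥ v) = -re (star (Pᴴ *ᵥ v) ⬝ᵥ Pᴴ *ᵥ v) := by
  have h := congrArg (re <| star v ⬝ᵥ ·) hv
  simp only [sub_mulVec, dotProduct_sub, star_dotProduct_mul_conjTranspose_mulVec, dotProduct_smul,
    smul_eq_mul, map_sub, re_star_dotProduct_mulVec_eq_zero hS, mul_re,
    (nonneg_iff.mp (dotProduct_star_self_nonneg v)).2] at h
  linarith

theorem re_le_zero_of_mulVec_eq_smul {S : Matrix n n 𝕜} {P : Matrix n m 𝕜} {μ : 𝕜}
    {v : n → 𝕜} (hS : Sᴴ = -S) (hv : (S - P * Pᴴ) *ᵥ v = μ • v) (hv0 : v ≠ 0) : re μ ≤ 0 := by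
  have hpos : 0 < re (star v ⬝ᵥ v) := (pos_iff.mp (dotProduct_star_self_pos_iff.mpr hv0)).1
  have hP : 0 ≤ re (star (Pᴴ *ᵥ v) ⬝ᵥ Pᴴ *ᵥ v) := (nonneg_iff.mp (dotProduct_star_self_nonneg _)).1
  nlinarith [re_mul_re_star_dotProduct_self hS hv]

theorem conjTranspose_mulVec_eq_zero_of_re_eq_zero {S : Matrix n n 𝕜} {P : Matrix n m 𝕜}
    {μ : 𝕜} {v : n → 𝕜} (hS : Sᴴ = -S) (hv : (S - P * Pᴴ) *ᵥ v = μ • v) (hre : re μ = 0) :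
    Pᴴ *ᵥ v = 0 := by
  have h := re_mul_re_star_dotProduct_self hS hv
  rw [hre, zero_mul, zero_eq_neg] at h
  have hnonneg := dotProduct_star_self_nonneg (Pᴴ *ᵥ v)
  refine dotProduct_star_self_eq_zero.mp (le_antisymm ?_ hnonneg)
  exact le_iff_re_im.mpr ⟨by simp [h], by simp [(nonneg_iff.mp hnonneg).2]⟩

end SkewHermitianMinusPositive

theorem re_lt_zero_of_mulVec_eq_smul {𝕜 m : Type*} [RCLike 𝕜] [Fintype m] {n : ℕ}
    {S : Matrix (Fin n) (Fin n) 𝕜} {P : Matrix (Fin n) m 𝕜} {μ : 𝕜} {v : Fin n → 𝕜}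
    (hS : Sᴴ = -S) (hK : ∀ w, w ᵥ* kalmanMatrix S P = 0 → w = 0)
    (hv : (S - P * Pᴴ) *ᵥ v = μ • v) (hv0 : v ≠ 0) : RCLike.re μ < 0 := by
  refine (re_le_zero_of_mulVec_eq_smul hS hv hv0).lt_of_ne fun hre => hv0 ?_
  have hPv := conjTranspose_mulVec_eq_zero_of_re_eq_zero hS hv hre
  have hSv : S *ᵥ v = μ • v := by
    rwa [sub_mulVec, ← mulVec_mulVec, hPv, mulVec_zero, sub_zero] at hv
  have hleft : star v ᵥ* S = (-star μ) • star v := by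
    rw [← conjTranspose_conjTranspose S, vecMul_conjTranspose, star_star, hS, neg_mulVec, hSv,
      star_neg, star_smul, neg_smul]
  have hright : star v ᵥ* P = 0 := by
    rw [← conjTranspose_conjTranspose P, vecMul_conjTranspose, star_star, hPv, star_zero]
  exact star_eq_zero.mp (hK _ (vecMul_kalmanMatrix_eq_zero hleft hright))

end Matrix

/-- If `A` is skew (`xᵀ A x = 0` for all `x`) and the pair `(A, B)` is
controllable (Kalman rank condition), then `A − B Bᵀ` is Hurwitz. -/
theorem collocated_feedback_hurwitz
    {n : ℕ} (A : Matrix (Fin n) (Fin n) ℝ) (B : Matrix (Fin n) (Fin 1) ℝ)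
    (hA : ∀ x : Fin n → ℝ, x ⬝ᵥ A.mulVec x = 0)
    (hctrb : (Matrix.of fun (i : Fin n) (kj : Fin n × Fin 1) =>
      (A ^ (kj.1 : ℕ) * B) i kj.2).rank = n) :
    ∀ μ : ℂ, (∃ v : Fin n → ℂ, v ≠ 0 ∧
      ((A - B * Bᵀ).map (fun r => (r : ℂ))).mulVec v = μ • v) → μ.re < 0 := by
  rintro μ ⟨v, hv0, hv⟩
  have hskew := transpose_eq_neg_of_forall_dotProduct_mulVec_self_eq_zero hA
  have hS : (A.map (↑))ᴴ = -A.map ((↑) : ℝ → ℂ) := by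
    ext i j
    have hij : A j i = -A i j := congrFun (congrFun hskew i) j
    simp [hij]
  have hM : (A - B * Bᵀ).map ((↑) : ℝ → ℂ) =
      A.map (↑) - B.map ((↑) : ℝ → ℂ) * (B.map ((↑) : ℝ → ℂ))ᴴ := by
    ext i j
    simp [Matrix.mul_apply]
  rw [hM] at hv
  refine re_lt_zero_of_mulVec_eq_smul hS (fun w hw => ?_) hv hv0
  refine eq_zero_of_vecMul_map_eq_zero Complex.ofRealHom (C := kalmanMatrix A B)
    (hctrb.trans (Fintype.card_fin n).symm) ?_
  rwa [kalmanMatrix_map]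
end

section
/- For a skew-symmetric real matrix A and vector B, an eigenvector v of A − BBᵀ with purely imaginary eigenvalue iω must satisfy Bᵀv = 0 and Av = iωv. -/
open Matrix
open scoped ComplexOrder

private lemma mulVec_star_real {m k : ℕ} (M : Matrix (Fin m) (Fin k) ℝ) (x : Fin k → ℂ) :
    (M.map (fun r => (r : ℂ))).mulVec (star x) = star ((M.map (fun r => (r : ℂ))).mulVec x) := by
  funext i
  simp [Matrix.mulVec, dotProduct, Matrix.map_apply, Complex.star_def, map_sum]

private lemma mulVec_dotProduct_eq {k : ℕ} {m : ℕ} (M : Matrix (Fin m) (Fin k) ℂ)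
    (x : Fin k → ℂ) (y : Fin m → ℂ) :
    (M.mulVec x) ⬝ᵥ y = x ⬝ᵥ (Mᵀ.mulVec y) := by
  rw [dotProduct_comm, Matrix.dotProduct_mulVec, dotProduct_comm]
  congr 1
  rw [Matrix.mulVec_transpose]

/-- For skew-symmetric real `A` and vector `B`, an eigenvector `v` of
`A − B Bᵀ` with purely imaginary eigenvalue `i ω` satisfies `Bᵀ v = 0` and
`A v = i ω v`. -/
theorem imaginary_eigenvector_in_kernel_of_B
    {n : ℕ} (A : Matrix (Fin n) (Fin n) ℝ) (B : Matrix (Fin n) (Fin 1) ℝ)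
    (hA : Aᵀ = -A) (ω : ℝ) (v : Fin n → ℂ) (hv : v ≠ 0)
    (heig : ((A - B * Bᵀ).map (fun r => (r : ℂ))).mulVec v =
      (Complex.I * ω) • v) :
    (Bᵀ.map (fun r => (r : ℂ))).mulVec v = 0 ∧
      (A.map (fun r => (r : ℂ))).mulVec v = (Complex.I * ω) • v := by
  set A' : Matrix (Fin n) (Fin n) ℂ := A.map (fun r => (r : ℂ)) with hA'
  set B' : Matrix (Fin n) (Fin 1) ℂ := B.map (fun r => (r : ℂ)) with hB'
  set C : Matrix (Fin 1) (Fin n) ℂ := Bᵀ.map (fun r => (r : ℂ)) with hC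
  have hCB : C = B'ᵀ := Matrix.transpose_map
  have hmap : (A - B * Bᵀ).map (fun r => (r : ℂ)) = A' - B' * C := by
    ext i j
    simp [hA', hB', hC, Matrix.map_apply, Matrix.sub_apply, Matrix.mul_apply]
  rw [hmap] at heig
  set w : Fin 1 → ℂ := C.mulVec v with hw
  set s1 : ℂ := star v ⬝ᵥ A'.mulVec v with hs1
  set r : ℂ := star v ⬝ᵥ v with hr
  have hA't : A'ᵀ = -A' := by
    ext i j
    have := congrFun (congrFun hA i) j
    simp only [Matrix.transpose_apply, Matrix.neg_apply] at this ⊢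
    simp [hA', Matrix.map_apply, this]
  -- s1 is purely imaginary
  have hs1star : star s1 = -s1 := by
    have h0 : star s1 = star (A'.mulVec v) ⬝ᵥ v := by
      rw [hs1, Matrix.star_dotProduct, star_star]
    rw [h0, show star (A'.mulVec v) = A'.mulVec (star v) from (mulVec_star_real A v).symm,
      mulVec_dotProduct_eq, hA't, Matrix.neg_mulVec, dotProduct_neg, hs1]
  -- r is real
  have hrstar : star r = r := by
    rw [hr]; exact (Matrix.star_dotProduct v v).symm
  -- key identity
  have hkey : s1 - star w ⬝ᵥ w = Complex.I * ω * r := by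
    have h1 : star v ⬝ᵥ ((A' - B' * C).mulVec v) = star v ⬝ᵥ ((Complex.I * ↑ω) • v) := by
      rw [heig]
    have h2 : (B' * C).mulVec v = B'.mulVec w := by
      rw [hw, Matrix.mulVec_mulVec]
    have h3 : star v ⬝ᵥ B'.mulVec w = star w ⬝ᵥ w := by
      rw [dotProduct_comm (star v), mulVec_dotProduct_eq, ← hCB,
        show C.mulVec (star v) = star w from by rw [hw]; exact mulVec_star_real Bᵀ v,
        dotProduct_comm]
    rw [Matrix.sub_mulVec, dotProduct_sub, h2, h3, dotProduct_smul] at h1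
    rw [h1, hr, smul_eq_mul]
  -- real parts
  have hs1re : s1.re = 0 := by
    have := congrArg Complex.re hs1star
    simp [Complex.star_def] at this
    linarith
  have hrim : r.im = 0 := by
    have := congrArg Complex.im hrstar
    simp [Complex.star_def] at this
    linarith
  have hwre : (star w ⬝ᵥ w).re = 0 := by
    have := congrArg Complex.re hkey
    simp [Complex.sub_re, hs1re, Complex.mul_re, Complex.mul_im, hrim] at this
    linarith
  have hwim : (star w ⬝ᵥ w).im = 0 := by
    have h : star (star w ⬝ᵥ w) = star w ⬝ᵥ w := (Matrix.star_dotProduct w w).symm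
    have := congrArg Complex.im h
    simp [Complex.star_def] at this
    linarith
  have hww : star w ⬝ᵥ w = 0 := Complex.ext hwre hwim
  have hw0 : w = 0 := dotProduct_star_self_eq_zero.mp hww
  refine ⟨hw0, ?_⟩
  have h2 : (B' * C).mulVec v = B'.mulVec w := by
    rw [hw, Matrix.mulVec_mulVec]
  rw [Matrix.sub_mulVec, h2, hw0, Matrix.mulVec_zero, sub_zero] at heig
  exact heig
end
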